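/- The Toda A_{n−1} classical r-matrix a₁₂ = (1/4) Σ_{i,j=1}^n sgn(i−j) e_{ij} ⊗ e_{ji} satisfies the modified classical Yang–Baxter equation [a₁₂, a₁₃] + [a₁₂, a₂₃] + [a₁₃, a₂₃] = (1/16)(Ω₁₂₃ − Ω₁₂₃^{t₁t₂t₃}), where Ω₁₂₃ = Σ_{i,j,k} e_{ij} ⊗ e_{jk} ⊗ e_{ki}. -/

import Mathlib

open Matrix BigOperators
open scoped Kronecker

/-- Elementary matrix `e_{ij}`. -/
noncomputable def E (n : ℕ) (i j : Fin n) : Matrix (Fin n) (Fin n) ℂ :=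
  Matrix.single i j 1

/-- `sgn(i - j)` as a complex number, with `sgn(0) = 0`. -/
def sg (n : ℕ) (i j : Fin n) : ℂ := ((((i : ℤ) - (j : ℤ)).sign : ℤ) : ℂ)

/-- Triple Kronecker product, acting on `(ℂ^n)^{⊗3}`. -/
noncomputable def K3 (n : ℕ) (A B C : Matrix (Fin n) (Fin n) ℂ) :
    Matrix ((Fin n × Fin n) × Fin n) ((Fin n × Fin n) × Fin n) ℂ :=
  A ⊗ₖ B ⊗ₖ C

/-- Toda r-matrix `a` placed in legs (1,2). -/
noncomputable def a12 (n : ℕ) :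
    Matrix ((Fin n × Fin n) × Fin n) ((Fin n × Fin n) × Fin n) ℂ :=
  (1/4 : ℂ) • ∑ i : Fin n, ∑ j : Fin n, sg n i j • K3 n (E n i j) (E n j i) 1

/-- Toda r-matrix `a` placed in legs (1,3). -/
noncomputable def a13 (n : ℕ) :
    Matrix ((Fin n × Fin n) × Fin n) ((Fin n × Fin n) × Fin n) ℂ :=
  (1/4 : ℂ) • ∑ i : Fin n, ∑ j : Fin n, sg n i j • K3 n (E n i j) 1 (E n j i)

/-- Toda r-matrix `a` placed in legs (2,3). -/
noncomputable def a23 (n : ℕ) :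
    Matrix ((Fin n × Fin n) × Fin n) ((Fin n × Fin n) × Fin n) ℂ :=
  (1/4 : ℂ) • ∑ i : Fin n, ∑ j : Fin n, sg n i j • K3 n 1 (E n i j) (E n j i)

/-- `Ω = Σ_{i,j,k} e_{ij} ⊗ e_{jk} ⊗ e_{ki}`. -/
noncomputable def Omega (n : ℕ) :
    Matrix ((Fin n × Fin n) × Fin n) ((Fin n × Fin n) × Fin n) ℂ :=
  ∑ i : Fin n, ∑ j : Fin n, ∑ k : Fin n, K3 n (E n i j) (E n j k) (E n k i)

/-- `Ω^{t₁t₂t₃} = Σ_{i,j,k} e_{ji} ⊗ e_{kj} ⊗ e_{ik}`. -/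
noncomputable def OmegaT (n : ℕ) :
    Matrix ((Fin n × Fin n) × Fin n) ((Fin n × Fin n) × Fin n) ℂ :=
  ∑ i : Fin n, ∑ j : Fin n, ∑ k : Fin n, K3 n (E n j i) (E n k j) (E n i k)


/-!
Every operator in the identity is a weighted permutation matrix on the index set
`(Fin n × Fin n) × Fin n`: `a₁₂, a₁₃, a₂₃` permute the legs by transpositions, `Ω` and
`Ω^{t₁t₂t₃}` by the two 3-cycles. Products of such matrices compose the permutations and
multiply the weights, so each of the six products in the bracket lives on one of the two
3-cycles, and the bracket is `1/16` times the two 3-cycles weighted by `±w`, where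
`w = sgn(p-q)sgn(p-r) + sgn(p-r)sgn(q-r) - sgn(p-q)sgn(q-r)`. This sign expression equals `1`
unless `p = q = r`, and there the two 3-cycles agree, so the weights cancel anyway.
-/

section WeightedPerm

variable {X R : Type*} [DecidableEq X]

def weightedPerm [Zero R] (w : X → R) (σ : X → X) : Matrix X X R :=
  Matrix.of fun x y => if y = σ x then w x else 0

@[simp]
lemma weightedPerm_apply [Zero R] (w : X → R) (σ : X → X) (x y : X) :
    weightedPerm w σ x y = if y = σ x then w x else 0 := rfl

lemma weightedPerm_mul [Fintype X] [NonUnitalNonAssocSemiring R] (w v : X → R) (σ τ : X → X) :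
    weightedPerm w σ * weightedPerm v τ = weightedPerm (fun x => w x * v (σ x)) (τ ∘ σ) := by
  ext x z
  simp only [Matrix.mul_apply, weightedPerm_apply, ite_mul, zero_mul]
  simp [mul_ite]

lemma weightedPerm_sub_weightedPerm_congr [AddGroup R] {w v : X → R} {σ τ : X → X}
    (h : ∀ x, σ x ≠ τ x → w x = v x) :
    weightedPerm w σ - weightedPerm w τ = weightedPerm v σ - weightedPerm v τ := by
  ext x y
  simp only [Matrix.sub_apply, weightedPerm_apply]
  by_cases hστ : σ x = τ x
  · simp [hστ]
  · rw [h x hστ]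

end WeightedPerm

lemma Int.sign_sub_mul_sign_sub_sum_eq_one {p q r : ℤ} (h : ¬(p = q ∧ q = r)) :
    (p - q).sign * (p - r).sign + (p - r).sign * (q - r).sign - (p - q).sign * (q - r).sign
      = 1 := by
  rcases lt_trichotomy p q with hpq | hpq | hpq <;>
    rcases lt_trichotomy q r with hqr | hqr | hqr <;>
    rcases lt_trichotomy p r with hpr | hpr | hpr <;>
    simp_all [Int.sign_eq_one_of_pos, Int.sign_eq_neg_one_of_neg] <;> omega

section Legs

variable {α : Type*}

def swap₁₂ (x : (α × α) × α) : (α × α) × α := ((x.1.2, x.1.1), x.2)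

def swap₁₃ (x : (α × α) × α) : (α × α) × α := ((x.2, x.1.2), x.1.1)

def swap₂₃ (x : (α × α) × α) : (α × α) × α := ((x.1.1, x.2), x.1.2)

def rotateLeft (x : (α × α) × α) : (α × α) × α := ((x.1.2, x.2), x.1.1)

def rotateRight (x : (α × α) × α) : (α × α) × α := ((x.2, x.1.1), x.1.2)

end Legs

section Toda

variable {n : ℕ}

lemma sg_self (p : Fin n) : sg n p p = 0 := by simp [sg]

lemma sg_swap (p q : Fin n) : sg n q p = -sg n p q := by
  simp only [sg, ← neg_sub (p : ℤ), Int.sign_neg, Int.cast_neg]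

def cyclicWeight (n : ℕ) (x : (Fin n × Fin n) × Fin n) : ℂ :=
  sg n x.1.1 x.1.2 * sg n x.1.1 x.2 + sg n x.1.1 x.2 * sg n x.1.2 x.2 -
    sg n x.1.1 x.1.2 * sg n x.1.2 x.2

lemma cyclicWeight_eq_one {p q r : Fin n} (h : ¬(p = q ∧ q = r)) :
    cyclicWeight n ((p, q), r) = 1 := by
  have h' : ¬((p : ℤ) = q ∧ (q : ℤ) = r) := by simpa [Fin.val_inj] using h
  simpa [cyclicWeight, sg] using
    congrArg (Int.cast : ℤ → ℂ) (Int.sign_sub_mul_sign_sub_sum_eq_one h')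

lemma a12_eq : a12 n = weightedPerm (fun x => sg n x.1.1 x.1.2 / 4) swap₁₂ := by
  ext ⟨⟨p, q⟩, r⟩ ⟨⟨p', q'⟩, r'⟩
  simp only [a12, one_div, K3, E, single, ite_and, Matrix.smul_apply, Matrix.sum_apply,
    kroneckerMap_apply, of_apply, eq_comm, mul_ite, mul_one, mul_zero, Matrix.one_apply,
    smul_eq_mul, Finset.sum_ite_irrel, Finset.sum_ite_eq, Finset.mem_univ, ↓reduceIte,
    Finset.sum_const_zero, weightedPerm_apply, swap₁₂, Prod.mk.injEq]
  split_ifs <;> simp_all [div_eq_inv_mul]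

lemma a13_eq : a13 n = weightedPerm (fun x => sg n x.1.1 x.2 / 4) swap₁₃ := by
  ext ⟨⟨p, q⟩, r⟩ ⟨⟨p', q'⟩, r'⟩
  simp only [a13, one_div, K3, E, single, ite_and, Matrix.smul_apply, Matrix.sum_apply,
    kroneckerMap_apply, of_apply, eq_comm, Matrix.one_apply, mul_ite, mul_one, mul_zero,
    smul_eq_mul, Finset.sum_ite_eq, Finset.mem_univ, ↓reduceIte, weightedPerm_apply, swap₁₃,
    Prod.mk.injEq]
  split_ifs <;> simp_all [div_eq_inv_mul]

lemma a23_eq : a23 n = weightedPerm (fun x => sg n x.1.2 x.2 / 4) swap₂₃ := by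
  ext ⟨⟨p, q⟩, r⟩ ⟨⟨p', q'⟩, r'⟩
  simp only [a23, one_div, K3, E, single, ite_and, Matrix.smul_apply, Matrix.sum_apply,
    kroneckerMap_apply, Matrix.one_apply, of_apply, eq_comm, mul_ite, mul_one, mul_zero,
    smul_eq_mul, Finset.sum_ite_eq, Finset.mem_univ, ↓reduceIte, weightedPerm_apply, swap₂₃,
    Prod.mk.injEq]
  split_ifs <;> simp_all [div_eq_inv_mul]

lemma Omega_eq : Omega n = weightedPerm 1 rotateLeft := by
  ext ⟨⟨p, q⟩, r⟩ ⟨⟨p', q'⟩, r'⟩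
  simp only [Omega, K3, E, single, ite_and, Matrix.sum_apply, kroneckerMap_apply, of_apply,
    eq_comm, mul_ite, mul_one, mul_zero, Finset.sum_ite_eq, Finset.mem_univ, ↓reduceIte,
    Finset.sum_ite_irrel, Finset.sum_const_zero, weightedPerm_apply, rotateLeft, Prod.mk.injEq,
    Pi.one_apply]
  split_ifs <;> simp_all

lemma OmegaT_eq : OmegaT n = weightedPerm 1 rotateRight := by
  ext ⟨⟨p, q⟩, r⟩ ⟨⟨p', q'⟩, r'⟩
  simp only [OmegaT, K3, E, single, ite_and, Matrix.sum_apply, kroneckerMap_apply, of_apply,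
    eq_comm, mul_ite, mul_one, mul_zero, Finset.sum_ite_irrel, Finset.sum_ite_eq, Finset.mem_univ,
    ↓reduceIte, Finset.sum_const_zero, weightedPerm_apply, rotateRight, Prod.mk.injEq,
    Pi.one_apply]
  split_ifs <;> simp_all

lemma classicalYangBaxter_eq :
    (a12 n * a13 n - a13 n * a12 n) + (a12 n * a23 n - a23 n * a12 n) +
      (a13 n * a23 n - a23 n * a13 n) =
    (1/16 : ℂ) • (weightedPerm (cyclicWeight n) rotateLeft -
      weightedPerm (cyclicWeight n) rotateRight) := by
  rw [a12_eq, a13_eq, a23_eq]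
  simp only [weightedPerm_mul]
  ext ⟨⟨p, q⟩, r⟩ y
  simp only [weightedPerm_apply, Matrix.add_apply, Matrix.sub_apply, Matrix.smul_apply,
    smul_eq_mul, Function.comp_apply, swap₁₂, swap₁₃, swap₂₃, rotateLeft, rotateRight,
    cyclicWeight, sg_swap q r, sg_swap p q]
  by_cases hdiag : p = q ∧ q = r
  · obtain ⟨rfl, rfl⟩ := hdiag
    simp [sg_self]
  have hLR : ((q, r), p) ≠ ((r, p), q) := by
    intro h
    simp only [Prod.mk.injEq] at h
    exact hdiag ⟨h.2, h.1.1⟩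
  by_cases hL : y = ((q, r), p)
  · simp only [hL, hLR, if_true, if_false]
    ring
  by_cases hR : y = ((r, p), q)
  · simp only [hR, hLR.symm, if_true, if_false]
    ring
  simp only [hL, hR, if_false]
  ring

end Toda

theorem toda_modified_YangBaxter (n : ℕ) :
    (a12 n * a13 n - a13 n * a12 n) + (a12 n * a23 n - a23 n * a12 n) +
      (a13 n * a23 n - a23 n * a13 n)
    = (1/16 : ℂ) • (Omega n - OmegaT n) := by
  rw [classicalYangBaxter_eq, Omega_eq, OmegaT_eq]
  congr 1
  apply weightedPerm_sub_weightedPerm_congr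
  rintro ⟨⟨p, q⟩, r⟩ hLR
  have hdiag : ¬(p = q ∧ q = r) := by
    rintro ⟨rfl, rfl⟩
    exact hLR rfl
  simpa using cyclicWeight_eq_one hdiag
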